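/- L(χ_5, 2) = 4π²/(25√5), i.e. ∑_{n≥1} χ_5(n)/n² = 4π²/(25√5). -/

import Mathlib

/-- The quadratic Dirichlet character modulo 5 given by the Legendre symbol `(n/5)`. -/
def chi5 (n : ℕ) : ℝ :=
  if n % 5 = 1 ∨ n % 5 = 4 then 1 else if n % 5 = 2 ∨ n % 5 = 3 then -1 else 0

/-!
The Fourier expansion of the second Bernoulli polynomial gives
`∑ cos (2πnx) / n² = π² (x² - x + 1/6)` for `0 ≤ x ≤ 1`. The Gauss sum of `χ₅` expresses the
character through these cosines: `χ₅(n) = (2/√5) (cos (2πn/5) - cos (4πn/5))`, which is checked on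
residues mod 5 with `cos (π/5) = (1 + √5)/4`. Taking the difference of the expansions at `x = 1/5`
and `x = 2/5` gives `(2/√5) π² (1/25 + 3/25) = 4π²/(25√5)`.
-/

open Real

theorem hasSum_cos_div_sq {x : ℝ} (hx : x ∈ Set.Icc (0 : ℝ) 1) :
    HasSum (fun n : ℕ => cos (2 * π * n * x) / n ^ 2) (π ^ 2 * (x ^ 2 - x + 1 / 6)) := by
  convert hasSum_one_div_nat_pow_mul_cos one_ne_zero hx using 1
  · ext n
    ring
  · rw [← bernoulliFun, mul_one, bernoulliFun_two]
    simp only [Nat.reduceAdd, Nat.factorial_two]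
    ring

theorem periodic_cos_two_pi_nat_mul {x : ℝ} {m k : ℕ} (h : m * x = k) :
    Function.Periodic (fun n : ℕ => cos (2 * π * n * x)) m := by
  intro n
  dsimp only
  rw [Nat.cast_add, show 2 * π * (n + m) * x = 2 * π * n * x + k * (2 * π) by rw [← h]; ring,
    cos_add_nat_mul_two_pi]

theorem cos_two_pi_div_five : cos (2 * π / 5) = (√5 - 1) / 4 := by
  rw [show 2 * π / 5 = 2 * (π / 5) by ring, cos_two_mul, cos_pi_div_five]
  nlinarith [sq_sqrt (show (0 : ℝ) ≤ 5 by norm_num)]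

theorem cos_four_pi_div_five : cos (4 * π / 5) = -(1 + √5) / 4 := by
  rw [show 4 * π / 5 = π - π / 5 by ring, cos_pi_sub, cos_pi_div_five, neg_div]

theorem chi5_mod_five (n : ℕ) : chi5 (n % 5) = chi5 n := by
  simp only [chi5, Nat.mod_mod]

theorem chi5_eq_cos_sub_cos_of_lt_five {r : ℕ} (hr : r < 5) :
    chi5 r = 2 / √5 * (cos (2 * π * r * (1 / 5)) - cos (2 * π * r * (2 / 5))) := by
  rw [show 2 * π * r * (2 / 5) = 2 * (2 * π * r * (1 / 5)) by ring, cos_two_mul]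
  have h1 : cos (2 * π * (1 : ℕ) * (1 / 5)) = (√5 - 1) / 4 := by
    rw [← cos_two_pi_div_five]; push_cast; ring_nf
  have h2 : cos (2 * π * (2 : ℕ) * (1 / 5)) = -(1 + √5) / 4 := by
    rw [← cos_four_pi_div_five]; push_cast; ring_nf
  have h3 : cos (2 * π * (3 : ℕ) * (1 / 5)) = -(1 + √5) / 4 := by
    rw [← cos_four_pi_div_five, ← cos_two_pi_sub]; push_cast; ring_nf
  have h4 : cos (2 * π * (4 : ℕ) * (1 / 5)) = (√5 - 1) / 4 := by
    rw [← cos_two_pi_div_five, ← cos_two_pi_sub]; push_cast; ring_nf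
  have h5 : √5 ^ 2 = 5 := sq_sqrt (by norm_num)
  have h5' : √5 ≠ 0 := by positivity
  interval_cases r <;> [norm_num [chi5]; rw [h1]; rw [h2]; rw [h3]; rw [h4]]
  all_goals
    field_simp
    norm_num [chi5]
    nlinarith

theorem chi5_eq_cos_sub_cos (n : ℕ) :
    chi5 n = 2 / √5 * (cos (2 * π * n * (1 / 5)) - cos (2 * π * n * (2 / 5))) := by
  have h1 := (periodic_cos_two_pi_nat_mul (m := 5) (k := 1) (x := 1 / 5) (by norm_num)).map_mod_nat n
  have h2 := (periodic_cos_two_pi_nat_mul (m := 5) (k := 2) (x := 2 / 5) (by norm_num)).map_mod_nat n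
  rw [← h1, ← h2, ← chi5_mod_five]
  exact chi5_eq_cos_sub_cos_of_lt_five (Nat.mod_lt _ (by norm_num))

/-- `L(χ₅, 2) = 4π²/(25√5)`. -/
theorem L_chi5_two : (∑' n : ℕ, chi5 (n + 1) / ((n : ℝ) + 1) ^ 2) =
    4 * Real.pi ^ 2 / (25 * Real.sqrt 5) := by
  have hsum : HasSum (fun n : ℕ => chi5 n / (n : ℝ) ^ 2) (4 * π ^ 2 / (25 * √5)) := by
    have h := ((hasSum_cos_div_sq (x := 1 / 5) (by norm_num)).sub
      (hasSum_cos_div_sq (x := 2 / 5) (by norm_num))).mul_left (2 / √5)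
    rw [show 4 * π ^ 2 / (25 * √5) = 2 / √5 * (π ^ 2 * ((1 / 5) ^ 2 - 1 / 5 + 1 / 6) -
      π ^ 2 * ((2 / 5) ^ 2 - 2 / 5 + 1 / 6)) by field_simp; ring]
    refine h.congr_fun fun n => ?_
    rw [chi5_eq_cos_sub_cos]
    ring
  rw [← hsum.tsum_eq, hsum.summable.tsum_eq_zero_add]
  simp [chi5]
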